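/- Let q be a prime power, N = q^2 − 1, F a finite field with q^2 elements, K a subfield of F with q elements, α ∈ F \ K, and g a generator of the cyclic group F*. For u ∈ F* let log_g u be the unique integer m with 0 ≤ m < N and g^m = u. Then for all integers k₁, k₂ with 0 ≤ k₁, k₂ ≤ N−1 such that (q−1) does not divide (k₁ − k₂), the quantity (1/(q+1))·|1 + ∑_{t∈K} exp(2πi·(k₁−k₂)·log_g(t−α)/N)| lies between (√q − 1)/(q+1) and (√q + 1)/(q+1) inclusive. Equivalently, for the (q+1) × N matrix Φ whose column indexed by j has the entry (1/√(q+1))·1 together with the entries (1/√(q+1))·exp(2πi·j·log_g(t−α)/N) for t ∈ K, any two columns Φ_{k₁}, Φ_{k₂} with k₁ ≢ k₂ (mod q−1) satisfy (√q − 1)/(q+1) ≤ |⟨Φ_{k₁}, Φ_{k₂}⟩| ≤ (√q + 1)/(q+1). -/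

import Mathlib

/-!
With `ζ = exp (2πi (k₁ - k₂) / N)`, the summands are the values `χ (t - α)` of the multiplicative
character `χ` of `F` sending `g` to `ζ`. The norm `g ^ (q + 1)` of `g` lies in `K` and
`χ (g ^ (q + 1)) = ζ ^ (q + 1) ≠ 1` since `q - 1 ∤ k₁ - k₂`, so `χ` is nontrivial on `Kˣ`.
Expanding, `|∑_{t ∈ K} χ (t - α)|² = ∑_{t, s} χ ((t - α) / (s - α))`; the diagonal contributes `q`,
and since `α ∉ K` and `|F| = |K|²`, the map `(t, s) ↦ (t - α) / (s - α)` sends the off-diagonal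
pairs bijectively onto `F \ K`, where `χ` sums to `∑_F χ - ∑_K χ = 0`. Hence the character sum
has absolute value `√q`, and the triangle inequality gives the bounds.
-/

open Finset

namespace Subfield

variable {F : Type*} [Field F] {K : Subfield F} {α : F}

theorem sub_ne_zero_of_notMem (hα : α ∉ K) (t : K) : (t : F) - α ≠ 0 :=
  sub_ne_zero.mpr (ne_of_mem_of_not_mem t.2 hα)

theorem eq_zero_of_mul_mem_of_notMem (hα : α ∉ K) {b : F} (hb : b ∈ K) (hαb : α * b ∈ K) :
    b = 0 := by
  by_contra hb0
  exact hα (by simpa [hb0] using K.div_mem hαb hb)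

theorem div_sub_notMem (hα : α ∉ K) {t s : K} (hts : t ≠ s) :
    ((t : F) - α) / (s - α) ∉ K := by
  intro hu
  generalize hu_def : ((t : F) - α) / (s - α) = u at hu
  have hus : u * (s - α) = t - α := hu_def ▸ div_mul_cancel₀ _ (sub_ne_zero_of_notMem hα s)
  have hu1 : u - 1 = 0 := by
    refine eq_zero_of_mul_mem_of_notMem hα (K.sub_mem hu K.one_mem) ?_
    have : α * (u - 1) = u * s - t := by linear_combination -hus
    rw [this]
    exact K.sub_mem (K.mul_mem hu s.2) t.2
  rw [sub_eq_zero.mp hu1, one_mul, sub_left_inj] at hus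
  exact hts (Subtype.ext hus).symm

theorem injOn_div_sub [Fintype K] (hα : α ∉ K) :
    Set.InjOn (fun p : K × K => ((p.1 : F) - α) / (p.2 - α)) (univ.offDiag : Finset (K × K)) := by
  rintro ⟨t, s⟩ hp ⟨t', s'⟩ - h
  have hts : t ≠ s := (mem_offDiag.mp hp).2.2
  have hcross : ((t : F) - α) * (s' - α) = (t' - α) * (s - α) :=
    (div_eq_div_iff (sub_ne_zero_of_notMem hα s) (sub_ne_zero_of_notMem hα s')).mp h
  -- the `α²` terms cancel, leaving a relation `α * b = a` with `a, b ∈ K`, so `a = b = 0`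
  have hlin : (t : F) + s' - t' - s = 0 := by
    refine eq_zero_of_mul_mem_of_notMem hα (K.sub_mem (K.sub_mem (K.add_mem t.2 s'.2) t'.2) s.2) ?_
    have : α * ((t : F) + s' - t' - s) = t * s' - t' * s := by linear_combination -hcross
    rw [this]
    exact K.sub_mem (K.mul_mem t.2 s'.2) (K.mul_mem t'.2 s.2)
  have hprod : ((t : F) - s) * (s' - s) = 0 := by linear_combination hcross + (α - s) * hlin
  rcases mul_eq_zero.mp hprod with h | h
  · exact absurd (Subtype.ext (sub_eq_zero.mp h)) hts
  · have hss : (s' : F) = s := sub_eq_zero.mp h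
    have htt : (t : F) = t' := by linear_combination hlin - h
    simp [Subtype.ext htt, Subtype.ext hss]

theorem sum_offDiag_div_sub [Fintype F] [DecidableEq F] [DecidablePred (· ∈ K)] [Fintype K]
    {M : Type*} [AddCommMonoid M] (hα : α ∉ K) (hcard : Fintype.card F = Fintype.card K ^ 2)
    (f : F → M) :
    ∑ p ∈ (univ.offDiag : Finset (K × K)), f ((p.1 - α) / (p.2 - α)) =
      ∑ u ∈ univ with u ∉ K, f u := by
  have himage : (univ.offDiag : Finset (K × K)).image (fun p => ((p.1 : F) - α) / (p.2 - α)) =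
      univ.filter (· ∉ K) := by
    refine eq_of_subset_of_card_le (fun u hu => ?_) ?_
    · obtain ⟨⟨t, s⟩, hp, rfl⟩ := mem_image.mp hu
      exact mem_filter.mpr ⟨mem_univ _, div_sub_notMem hα (mem_offDiag.mp hp).2.2⟩
    · have hK : #(univ.filter (· ∈ K)) = Fintype.card K := (Fintype.card_subtype _).symm
      have hsplit := card_filter_add_card_filter_not (s := (univ : Finset F)) (· ∈ K)
      rw [hK, card_univ, hcard, sq] at hsplit
      rw [card_image_of_injOn (injOn_div_sub hα), offDiag_card, card_univ]
      have := Nat.le_mul_self (Fintype.card K)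
      omega
  rw [← himage, sum_image (injOn_div_sub hα)]

open Polynomial in
theorem mem_of_pow_card_eq_self [Fintype K] {x : F} (hx : x ^ Fintype.card K = x) : x ∈ K := by
  classical
  have hq : 1 < Fintype.card K := Fintype.one_lt_card
  set p : F[X] := X ^ Fintype.card K - X
  have hp : p ≠ 0 := FiniteField.X_pow_card_sub_X_ne_zero F hq
  have hroot : ∀ z : F, z ^ Fintype.card K = z → z ∈ p.roots.toFinset := fun z hz => by
    simp [p, mem_roots hp, hz]
  have hKroots : univ.image ((↑) : K → F) = p.roots.toFinset := by
    refine eq_of_subset_of_card_le (fun z hz => ?_) ?_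
    · obtain ⟨t, -, rfl⟩ := mem_image.mp hz
      exact hroot t (by rw [← SubmonoidClass.coe_pow, FiniteField.pow_card])
    · calc #p.roots.toFinset ≤ Multiset.card p.roots := Multiset.toFinset_card_le _
        _ ≤ p.natDegree := card_roots' p
        _ = #(univ.image ((↑) : K → F)) := by
          rw [FiniteField.X_pow_card_sub_X_natDegree_eq F hq,
            card_image_of_injective _ Subtype.val_injective, card_univ]
  obtain ⟨t, -, rfl⟩ := mem_image.mp (hKroots ▸ hroot x hx)
  exact t.2

theorem pow_card_succ_mem [Fintype F] [Fintype K] (hcard : Fintype.card F = Fintype.card K ^ 2)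
    (x : F) : x ^ (Fintype.card K + 1) ∈ K := by
  refine mem_of_pow_card_eq_self ?_
  rw [← pow_mul, add_one_mul, ← sq, pow_add, ← hcard, FiniteField.pow_card, pow_succ']

end Subfield

namespace MulChar

variable {F : Type*} [Field F] {K : Subfield F}

section Domain

variable {R : Type*} [CommRing R] [IsDomain R]

theorem sum_subfield_eq_zero [Fintype K] (χ : MulChar F R) {y : F} (hy : y ∈ K) (hy0 : y ≠ 0)
    (hχy : χ y ≠ 1) : ∑ t : K, χ t = 0 := by
  have hy0' : (⟨y, hy⟩ : K) ≠ 0 := fun h => hy0 (congrArg Subtype.val h)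
  refine eq_zero_of_mul_eq_self_left hχy ?_
  simpa only [mul_sum, ← map_mul, Units.val_mk0, Subfield.coe_mul] using
    (Units.mk0 _ hy0').mulLeft_bijective.sum_comp (fun t : K => χ t)

theorem sum_notMem_subfield_eq_zero [Fintype F] [DecidablePred (· ∈ K)] [Fintype K]
    (χ : MulChar F R) {y : F} (hy : y ∈ K) (hy0 : y ≠ 0) (hχy : χ y ≠ 1) :
    ∑ u ∈ univ with u ∉ K, χ u = 0 := by
  have hχ : χ ≠ 1 := by
    rintro rfl
    exact hχy (one_apply hy0.isUnit)
  have hK : ∑ u ∈ univ with u ∈ K, χ u = 0 := by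
    rw [sum_subtype (p := (· ∈ K)) _ (by simp) χ]
    exact χ.sum_subfield_eq_zero hy hy0 hχy
  have := sum_eq_zero_of_ne_one hχ
  rwa [← sum_filter_add_sum_filter_not univ (· ∈ K), hK, zero_add] at this

end Domain

open ComplexConjugate in
theorem norm_sum_sub_sq [Fintype F] [Fintype K] (χ : MulChar F ℂ) {α : F} (hα : α ∉ K)
    (hcard : Fintype.card F = Fintype.card K ^ 2) {y : F} (hy : y ∈ K) (hy0 : y ≠ 0)
    (hχy : χ y ≠ 1) : ‖∑ t : K, χ (t - α)‖ ^ 2 = Fintype.card K := by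
  classical
  have hdiag : ∑ p ∈ (univ : Finset K).diag, χ ((p.1 - α) / (p.2 - α)) = Fintype.card K := by
    simp [sum_diag, div_self (Subfield.sub_ne_zero_of_notMem hα _)]
  suffices (‖∑ t : K, χ (t - α)‖ ^ 2 : ℂ) = Fintype.card K by exact_mod_cast this
  calc (‖∑ t : K, χ (t - α)‖ ^ 2 : ℂ)
      = (∑ t : K, χ (t - α)) * conj (∑ t : K, χ (t - α)) := (Complex.mul_conj' _).symm
    _ = ∑ p ∈ (univ : Finset (K × K)), χ ((p.1 - α) / (p.2 - α)) := by
      simp only [map_sum, sum_mul_sum, Fintype.sum_prod_type, div_eq_mul_inv, map_mul]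
      simp [← Complex.star_def, star_apply', inv_apply']
    _ = Fintype.card K + ∑ u ∈ univ with u ∉ K, χ u := by
      rw [← univ_product_univ, ← diag_union_offDiag, sum_union (disjoint_diag_offDiag _), hdiag,
        Subfield.sum_offDiag_div_sub hα hcard]
    _ = Fintype.card K := by rw [χ.sum_notMem_subfield_eq_zero hy hy0 hχy, add_zero]

theorem exists_apply_eq_pow_log [Fintype F] [DecidableEq F] {R : Type*} [CommMonoidWithZero R]
    {g : Fˣ} (hg : ∀ x, x ∈ Subgroup.zpowers g) {log : F → ℕ}
    (hlog : ∀ u : F, u ≠ 0 → (g : F) ^ log u = u) {ζ : R} (hζ : ζ ^ Fintype.card Fˣ = 1) :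
    ∃ χ : MulChar F R, χ g = ζ ∧ ∀ u : F, u ≠ 0 → χ u = ζ ^ log u := by
  let ζ' : Rˣ := Units.ofPowEqOne ζ _ hζ Fintype.card_ne_zero
  have hζ' : ζ' ∈ rootsOfUnity (Fintype.card Fˣ) R := by
    rw [mem_rootsOfUnity]
    exact Units.pow_ofPowEqOne _ _
  have hχg : ofRootOfUnity hζ' hg g = ζ := ofRootOfUnity_spec hζ' hg
  refine ⟨ofRootOfUnity hζ' hg, hχg, fun u hu => ?_⟩
  calc ofRootOfUnity hζ' hg u = ofRootOfUnity hζ' hg ((g : F) ^ log u) := by rw [hlog u hu]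
    _ = ζ ^ log u := by rw [map_pow, hχg]

end MulChar

open Complex in
theorem Complex.exp_two_pi_I_mul_div_pow_eq_one_iff {n : ℕ} (hn : n ≠ 0) (c : ℤ) (m : ℕ) :
    exp (2 * Real.pi * I * c / n) ^ m = 1 ↔ (n : ℤ) ∣ c * m := by
  rw [← (isPrimitiveRoot_exp n hn).zpow_eq_one_iff_dvd, zpow_mul, ← exp_int_mul, zpow_natCast]
  ring_nf

theorem partial_fourier_cross_incoherence_general
    (q N : ℕ) (hN : N = q ^ 2 - 1)
    (F : Type*) [Field F] [Fintype F]
    (hF : Fintype.card F = q ^ 2)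
    (K : Subfield F) [Fintype ↥K] (hK : Fintype.card ↥K = q)
    (α : F) (hα : α ∉ K)
    (g : Fˣ) (hg : ∀ x : Fˣ, x ∈ Subgroup.zpowers g)
    (log : F → ℕ)
    (hlog : ∀ u : F, u ≠ 0 → log u < N ∧ (g : F) ^ log u = u) :
    ∀ k₁ k₂ : ℕ, k₁ < N → k₂ < N → ¬ (((q : ℤ) - 1) ∣ ((k₁ : ℤ) - (k₂ : ℤ))) →
      (Real.sqrt q - 1) / ((q : ℝ) + 1) ≤
        (1 / ((q : ℝ) + 1)) * ‖(1 : ℂ) +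
          ∑ t : ↥K, Complex.exp (2 * (Real.pi : ℂ) * Complex.I *
            ((k₁ : ℂ) - (k₂ : ℂ)) * (log ((t : F) - α) : ℂ) / (N : ℂ))‖ ∧
      (1 / ((q : ℝ) + 1)) * ‖(1 : ℂ) +
          ∑ t : ↥K, Complex.exp (2 * (Real.pi : ℂ) * Complex.I *
            ((k₁ : ℂ) - (k₂ : ℂ)) * (log ((t : F) - α) : ℂ) / (N : ℂ))‖ ≤
        (Real.sqrt q + 1) / ((q : ℝ) + 1) := by
  classical
  intro k₁ k₂ _ _ hdvd
  have hq : 1 < q := hK ▸ Fintype.one_lt_card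
  have hN0 : N ≠ 0 := by rw [hN]; exact Nat.sub_ne_zero_of_lt (Nat.one_lt_pow two_ne_zero hq)
  have hNq : (N : ℤ) = ((q : ℤ) - 1) * (q + 1) := by
    rw [hN, Nat.cast_sub (Nat.one_le_pow _ _ (by omega))]; push_cast; ring
  set ζ : ℂ := Complex.exp (2 * Real.pi * Complex.I * ((k₁ - k₂ : ℤ) : ℂ) / N)
  obtain ⟨χ, hχg, hχ⟩ := MulChar.exists_apply_eq_pow_log hg (fun u hu => (hlog u hu).2) (ζ := ζ)
    (by rw [Fintype.card_units, hF, ← hN, Complex.exp_two_pi_I_mul_div_pow_eq_one_iff hN0]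
        exact dvd_mul_left _ _)
  have hχK : χ ((g : F) ^ (q + 1)) ≠ 1 := by
    rw [map_pow, hχg, Ne, Complex.exp_two_pi_I_mul_div_pow_eq_one_iff hN0, hNq]
    push_cast
    rwa [mul_dvd_mul_iff_right (by positivity)]
  have hnorm : ‖∑ t : K, χ (t - α)‖ = √q := by
    have hcard : Fintype.card F = Fintype.card K ^ 2 := by rw [hF, hK]
    rw [← Real.sqrt_sq (norm_nonneg _), χ.norm_sum_sub_sq hα hcard
      (hK ▸ Subfield.pow_card_succ_mem hcard g) (pow_ne_zero _ g.ne_zero) hχK, hK]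
  have hsum : ∑ t : K, Complex.exp (2 * (Real.pi : ℂ) * Complex.I * ((k₁ : ℂ) - (k₂ : ℂ)) *
      (log ((t : F) - α) : ℂ) / (N : ℂ)) = ∑ t : K, χ (t - α) := by
    refine sum_congr rfl fun t _ => ?_
    rw [hχ _ (Subfield.sub_ne_zero_of_notMem hα t), ← Complex.exp_nat_mul]
    congr 1
    push_cast
    ring
  have hclose := abs_norm_sub_norm_le (1 + ∑ t : K, χ (t - α)) (∑ t : K, χ (t - α))
  rw [add_sub_cancel_right, norm_one, hnorm, abs_le] at hclose
  rw [hsum, one_div_mul_eq_div]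
  constructor <;> gcongr <;> linarith [hclose.1, hclose.2]

/-- **Theorem 3.4(2): near-orthogonality across different bases.**
Let `q` be a prime power, `N = q² − 1`, `F` a finite field with `q²` elements, `K` a
subfield with `q` elements, `α ∈ F \ K`, and `g` a generator of `Fˣ`.  Then for all
`0 ≤ k₁, k₂ ≤ N−1` with `(q−1) ∤ (k₁ − k₂)`,
`(√q − 1)/(q+1) ≤ (1/(q+1))·|1 + ∑_{t∈K} exp(2πi·(k₁−k₂)·log_g(t−α)/N)| ≤ (√q + 1)/(q+1)`,
i.e. any two columns `Φ_{k₁}, Φ_{k₂}` of the `(q+1) × N` partial Fourier matrix with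
`k₁ ≢ k₂ (mod q−1)` satisfy `(√q − 1)/(q+1) ≤ |⟨Φ_{k₁}, Φ_{k₂}⟩| ≤ (√q + 1)/(q+1)`. -/
theorem partial_fourier_cross_incoherence
    (q N : ℕ) (hq : IsPrimePow q) (hN : N = q ^ 2 - 1)
    (F : Type*) [Field F] [Fintype F]
    (hF : Fintype.card F = q ^ 2)
    (K : Subfield F) [Fintype ↥K] (hK : Fintype.card ↥K = q)
    (α : F) (hα : α ∉ K)
    (g : Fˣ) (hg : ∀ x : Fˣ, x ∈ Subgroup.zpowers g)
    (log : F → ℕ)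
    (hlog : ∀ u : F, u ≠ 0 → log u < N ∧ (g : F) ^ log u = u) :
    ∀ k₁ k₂ : ℕ, k₁ < N → k₂ < N → ¬ (((q : ℤ) - 1) ∣ ((k₁ : ℤ) - (k₂ : ℤ))) →
      (Real.sqrt q - 1) / ((q : ℝ) + 1) ≤
        (1 / ((q : ℝ) + 1)) * ‖(1 : ℂ) +
          ∑ t : ↥K, Complex.exp (2 * (Real.pi : ℂ) * Complex.I *
            ((k₁ : ℂ) - (k₂ : ℂ)) * (log ((t : F) - α) : ℂ) / (N : ℂ))‖ ∧
      (1 / ((q : ℝ) + 1)) * ‖(1 : ℂ) +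
          ∑ t : ↥K, Complex.exp (2 * (Real.pi : ℂ) * Complex.I *
            ((k₁ : ℂ) - (k₂ : ℂ)) * (log ((t : F) - α) : ℂ) / (N : ℂ))‖ ≤
        (Real.sqrt q + 1) / ((q : ℝ) + 1) :=
  partial_fourier_cross_incoherence_general q N hN F hF K hK α hα g hg log hlog
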